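/- Let S be a substring-free set of strings over the DNA alphabet and let C = s'_{i1}, s'_{i2}, …, s'_{ih}, s'_{i1} and D = s'_{j1}, s'_{j2}, …, s'_{jg}, s'_{j1} be two distinct cycles in an optimal cycle cover CYC(G_S). Let e = ⟨s'_{i1},…,s'_{ih}⟩ and f = ⟨s'_{j1},…,s'_{jg}⟩. Then e and f are inequivalent; moreover, the pairs (e, f̄^R), (ē^R, f), and (ē^R, f̄^R) are also inequivalent. -/

import Mathlib

/-- The DNA alphabet. -/
inductive DNA : Type
  | A | T | G | C
  deriving DecidableEq, Repr

/-- Complement of a DNA base: a↔t, g↔c. -/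
def DNA.compl : DNA → DNA
  | .A => .T
  | .T => .A
  | .G => .C
  | .C => .G

/-- Strings over the DNA alphabet. -/
abbrev Str : Type := List DNA

/-- Reverse complement of a string. -/
def rc (s : Str) : Str := (s.map DNA.compl).reverse

/-- An approximate solution for the SCS-RC instance `S`: a string containing,
for each `s ∈ S`, either `s` or its reverse complement as a substring. -/
def ApproxSol (S : Finset Str) (u : Str) : Prop :=
  ∀ s ∈ S, s <:+: u ∨ rc s <:+: u

/-- `OPT S` is the minimum length of an approximate solution for the SCS-RC instance `S`. -/
noncomputable def OPT (S : Finset Str) : ℕ :=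
  sInf {n | ∃ u : Str, ApproxSol S u ∧ u.length = n}

/-- `S` is substring-free: no string of `S ∪ S̄^R` is a substring of another. -/
def SubstrFree (S : Finset Str) : Prop :=
  ∀ x, (x ∈ S ∨ rc x ∈ S) → ∀ y, (y ∈ S ∨ rc y ∈ S) → x ≠ y → ¬ x <:+: y

/-- `ov x y`: the length of the longest string `v` such that `x = u ++ v` and
`y = v ++ w` for nonempty `u`, `w`. -/
noncomputable def ov (x y : Str) : ℕ :=
  sSup {k | ∃ v : Str, v.length = k ∧ (∃ u : Str, u ≠ [] ∧ x = u ++ v) ∧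
        (∃ w : Str, w ≠ [] ∧ y = v ++ w)}

/-- `prefStr x y = pref(x, y)`: the prefix of `x` with respect to `y`. -/
noncomputable def prefStr (x y : Str) : Str := x.take (x.length - ov x y)

/-- `distStr x y = dist(x, y) = |x| - ov(x, y)`. -/
noncomputable def distStr (x y : Str) : ℕ := x.length - ov x y

/-- The merge `⟨x, y⟩ = pref(x, y) ++ y`. -/
noncomputable def mergeStr (x y : Str) : Str := prefStr x y ++ y

/-- `superstr [x1, …, xr] = ⟨x1, …, xr⟩ = pref(x1,x2) ⋯ pref(x_{r-1},x_r) ++ x_r`. -/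
noncomputable def superstr : List Str → Str
  | [] => []
  | [x] => x
  | x :: y :: rest => prefStr x y ++ superstr (y :: rest)

/-- `‖S‖`: the total length of the strings of the finite set `S`. -/
def normS (S : Finset Str) : ℕ := ∑ s ∈ S, s.length

/-- Pairs `(x, y)` of strings from the collection `S` or their reverse complements,
with `x = y`, or with `x ≠ y` and `rc x ≠ y`, as considered by MGREEDY-RC. -/
def ValidPair (S : Finset Str) (x y : Str) : Prop :=
  (x ∈ S ∨ rc x ∈ S) ∧ (y ∈ S ∨ rc y ∈ S) ∧ (x = y ∨ (x ≠ y ∧ rc x ≠ y))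

/-- `MGreedyExec S T`: some execution of MGREEDY-RC starting from the collection `S`
(under some tie-breaking among pairs of maximum overlap) produces the set `T`. -/
inductive MGreedyExec : Finset Str → Finset Str → Prop
  | done : MGreedyExec ∅ ∅
  | close (S T : Finset Str) (x : Str)
      (hx : x ∈ S ∨ rc x ∈ S)
      (hmax : ∀ a b, ValidPair S a b → ov a b ≤ ov x x)
      (h : MGreedyExec (S \ {x, rc x}) T) :
      MGreedyExec S (insert x T)
  | merge (S T : Finset Str) (x y : Str)
      (hx : x ∈ S ∨ rc x ∈ S) (hy : y ∈ S ∨ rc y ∈ S)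
      (hne : x ≠ y) (hrc : rc x ≠ y)
      (hmax : ∀ a b, ValidPair S a b → ov a b ≤ ov x y)
      (h : MGreedyExec (insert (mergeStr x y) (S \ {x, rc x, y, rc y})) T) :
      MGreedyExec S T

/-- `GreedyExec S u`: some execution of GREEDY-RC starting from the collection `S`
(under some tie-breaking among pairs of maximum overlap) outputs the string `u`. -/
inductive GreedyExec : Finset Str → Str → Prop
  | single (x : Str) : GreedyExec {x} x
  | merge (S : Finset Str) (u x y : Str)
      (hx : x ∈ S ∨ rc x ∈ S) (hy : y ∈ S ∨ rc y ∈ S)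
      (hne : x ≠ y) (hrc : rc x ≠ y)
      (hmax : ∀ a b, (a ∈ S ∨ rc a ∈ S) → (b ∈ S ∨ rc b ∈ S) → a ≠ b → rc a ≠ b →
        ov a b ≤ ov x y)
      (hcard : 1 < S.card)
      (h : GreedyExec (insert (mergeStr x y) (S \ {x, rc x, y, rc y})) u) :
      GreedyExec S u

/-- Reverse complement of a path: the path of the reverse complements, reversed. -/
def rcPath (p : List Str) : List Str := (p.map rc).reverse

/-- Valid pairs for the path-level description of MGREEDY-RC, where each collection
element is the path of original strings composing it, its string value being `superstr`. -/
def ValidPairP (P : Finset (List Str)) (p q : List Str) : Prop :=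
  (p ∈ P ∨ rcPath p ∈ P) ∧ (q ∈ P ∨ rcPath q ∈ P) ∧
  (superstr p = superstr q ∨ (superstr p ≠ superstr q ∧ rc (superstr p) ≠ superstr q))

/-- `MGreedyCyc P C`: the path-level description of an execution of MGREEDY-RC.
Starting from the collection of paths `P`, merging the paths `p` and `q` (adding the
edge from the last vertex of `p` to the first of `q`) when the corresponding strings
are merged, and closing the path `p` into the cycle `p` (with the edge from its last
vertex to its first) when the corresponding string is moved to `T`, some execution
produces the set of closed cycles `C`. -/
inductive MGreedyCyc : Finset (List Str) → Finset (List Str) → Prop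
  | done : MGreedyCyc ∅ ∅
  | close (P C : Finset (List Str)) (p : List Str)
      (hp : p ∈ P ∨ rcPath p ∈ P)
      (hmax : ∀ q₁ q₂, ValidPairP P q₁ q₂ →
        ov (superstr q₁) (superstr q₂) ≤ ov (superstr p) (superstr p))
      (h : MGreedyCyc (P \ {p, rcPath p}) C) :
      MGreedyCyc P (insert p C)
  | merge (P C : Finset (List Str)) (p q : List Str)
      (hp : p ∈ P ∨ rcPath p ∈ P) (hq : q ∈ P ∨ rcPath q ∈ P)
      (hne : superstr p ≠ superstr q) (hrc : rc (superstr p) ≠ superstr q)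
      (hmax : ∀ q₁ q₂, ValidPairP P q₁ q₂ →
        ov (superstr q₁) (superstr q₂) ≤ ov (superstr p) (superstr q))
      (h : MGreedyCyc (insert (p ++ q) (P \ {p, rcPath p, q, rcPath q})) C) :
      MGreedyCyc P C

/-- The weight of the cycle `x1, …, xr, x1` given by the list `[x1, …, xr]`:
`Σ_{i=1}^{r} dist(x_i, x_{i+1})` with indices modulo `r`. -/
noncomputable def cycleWeight (c : List Str) : ℕ :=
  ((c.zip (c.rotate 1)).map fun p => distStr p.1 p.2).sum

/-- `C` is a cycle cover of the distance graph `G_S`: a set of vertex-disjoint cycles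
on vertices of `S ∪ S̄^R` such that for each `s ∈ S` exactly one of `s` and `rc s`
is contained in the cycles. -/
def IsCycleCover (S : Finset Str) (C : Finset (List Str)) : Prop :=
  (∀ c ∈ C, c ≠ []) ∧
  (∀ c ∈ C, c.Nodup) ∧
  (∀ c ∈ C, ∀ d ∈ C, c ≠ d → ∀ x ∈ c, x ∉ d) ∧
  (∀ c ∈ C, ∀ x ∈ c, x ∈ S ∨ rc x ∈ S) ∧
  (∀ s ∈ S, Xor' (∃ c ∈ C, s ∈ c) (∃ c ∈ C, rc s ∈ c))

/-- The total weight of a cycle cover. -/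
noncomputable def coverWeight (C : Finset (List Str)) : ℕ := ∑ c ∈ C, cycleWeight c

/-- `minCoverWeight S = w(CYC(G_S))`: the minimum total weight of a cycle cover of `G_S`. -/
noncomputable def minCoverWeight (S : Finset Str) : ℕ :=
  sInf {n | ∃ C : Finset (List Str), IsCycleCover S C ∧ coverWeight C = n}

/-- `x` is a factor of `s`: `s = x^i ++ y` for some `i ≥ 1` and some prefix `y` of `x`. -/
def IsFactor (x s : Str) : Prop :=
  x ≠ [] ∧ ∃ i : ℕ, 1 ≤ i ∧ ∃ y : Str, y <+: x ∧ s = (List.replicate i x).flatten ++ y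

/-- `period s`: the length of the shortest factor of `s`. -/
noncomputable def periodStr (s : Str) : ℕ :=
  sInf {k | ∃ x : Str, IsFactor x s ∧ x.length = k}

open Classical in
/-- `factorStr s`: a shortest factor of `s`. -/
noncomputable def factorStr (s : Str) : Str :=
  if h : ∃ x : Str, IsFactor x s ∧ x.length = periodStr s then h.choose else []

/-- Two strings are equivalent if the factor of one is a cyclic shift of the factor
of the other. -/
def EquivStr (x y : Str) : Prop :=
  ∃ e f : Str, factorStr x = e ++ f ∧ factorStr y = f ++ e

/-!
Suppose `e'` and `f'` are equivalent, where `e = ⟨C⟩` and `f = ⟨D⟩`. Then `e'` and `f'` are both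
substrings of powers of one word `g` with `|g| = period(e) ≤ w(C)`, so every vertex of `C` and
of `D`, reverse-complemented as in `e'` and `f'`, occurs in the periodic word `g g g ⋯`. Since
`S` is substring-free, these occurrences start at distinct positions modulo `|g|`, and
consecutive ones overlap as far as their positions allow; visiting the vertices in order of
position therefore gives a single cycle of weight at most `|g| ≤ w(C)`. Replacing `C` and `D`
by this cycle yields a cycle cover lighter by at least `w(D) > 0`, contradicting optimality.
-/
section ReverseComplement

@[simp] lemma DNA.compl_compl (b : DNA) : b.compl.compl = b := by cases b <;> rfl

@[simp] lemma rc_rc (s : Str) : rc (rc s) = s := by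
  simp [rc, List.map_reverse, Function.comp_def]

lemma rc_injective : Function.Injective rc :=
  Function.LeftInverse.injective rc_rc

@[simp] lemma length_rc (s : Str) : (rc s).length = s.length := by simp [rc]

@[simp] lemma rc_eq_nil {s : Str} : rc s = [] ↔ s = [] := by simp [rc]

lemma rc_append (s t : Str) : rc (s ++ t) = rc t ++ rc s := by simp [rc]

lemma rc_infix_rc {s t : Str} (h : s <:+: t) : rc s <:+: rc t :=
  List.reverse_infix.mpr (h.map _)

end ReverseComplement

section Overlap

lemma ov_set_bddAbove (x y : Str) :
    BddAbove {k | ∃ v : Str, v.length = k ∧ (∃ u : Str, u ≠ [] ∧ x = u ++ v) ∧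
        (∃ w : Str, w ≠ [] ∧ y = v ++ w)} :=
  ⟨x.length, by rintro k ⟨v, rfl, ⟨u, -, rfl⟩, -⟩; simp⟩

lemma distStr_le_of_eq_append {x y u v w : Str} (hu : u ≠ []) (hw : w ≠ [])
    (hx : x = u ++ v) (hy : y = v ++ w) : distStr x y ≤ u.length := by
  have : v.length ≤ ov x y :=
    le_csSup (ov_set_bddAbove x y) ⟨v, rfl, ⟨u, hu, hx⟩, ⟨w, hw, hy⟩⟩
  rw [distStr, hx, List.length_append] at *
  omega

lemma distStr_pos {x : Str} (hx : x ≠ []) (y : Str) : 0 < distStr x y := by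
  have : ov x y < x.length := by
    refine lt_of_le_of_lt (csSup_le' ?_) (Nat.sub_lt (List.length_pos_iff.mpr hx) one_pos)
    rintro k ⟨v, rfl, ⟨u, hu, rfl⟩, -⟩
    have := List.length_pos_iff.mpr hu
    simp only [List.length_append]
    omega
  unfold distStr
  omega

lemma distStr_le_length (x y : Str) : distStr x y ≤ x.length := Nat.sub_le _ _

lemma prefix_mergeStr (x y : Str) : x <+: mergeStr x y := by
  rcases Set.eq_empty_or_nonempty {k | ∃ v : Str, v.length = k ∧
      (∃ u : Str, u ≠ [] ∧ x = u ++ v) ∧ (∃ w : Str, w ≠ [] ∧ y = v ++ w)} with h | h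
  · have hov : ov x y = 0 := by rw [ov, h, csSup_empty]; rfl
    simp [mergeStr, prefStr, hov]
  · obtain ⟨v, hv, ⟨u, -, hx⟩, ⟨w, -, hy⟩⟩ := Nat.sSup_mem h (ov_set_bddAbove x y)
    have hpref : prefStr x y = u := by
      rw [prefStr, ov, ← hv, hx]
      simp
    rw [mergeStr, hpref, hx, hy, ← List.append_assoc]
    exact List.prefix_append _ _

end Overlap

section Superstring

noncomputable def pathWeight : List Str → ℕ
  | [] => 0
  | [_] => 0
  | x :: y :: r => distStr x y + pathWeight (y :: r)

lemma superstr_cons_cons (x y : Str) (r : List Str) :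
    superstr (x :: y :: r) = prefStr x y ++ superstr (y :: r) := rfl

lemma prefix_superstr (x : Str) (r : List Str) : x <+: superstr (x :: r) := by
  induction r generalizing x with
  | nil => exact List.prefix_refl x
  | cons y r ih =>
    obtain ⟨t, ht⟩ := ih y
    rw [superstr_cons_cons, ← ht, ← List.append_assoc]
    exact (prefix_mergeStr x y).trans (List.prefix_append _ _)

lemma getLast_suffix_superstr (x : Str) (r : List Str) :
    (x :: r).getLast (List.cons_ne_nil _ _) <:+ superstr (x :: r) := by
  induction r generalizing x with
  | nil => exact List.suffix_refl x
  | cons y r ih =>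
    rw [superstr_cons_cons, List.getLast_cons (List.cons_ne_nil _ _)]
    exact (ih y).trans (List.suffix_append _ _)

lemma infix_superstr_of_mem {l : List Str} {z : Str} (hz : z ∈ l) : z <:+: superstr l := by
  induction l with
  | nil => simp at hz
  | cons x r ih =>
    rcases List.mem_cons.mp hz with rfl | hz
    · exact (prefix_superstr z r).isInfix
    · obtain ⟨y, r, rfl⟩ := List.exists_cons_of_ne_nil (List.ne_nil_of_mem hz)
      rw [superstr_cons_cons]
      exact (ih hz).trans (List.suffix_append _ _).isInfix

lemma superstr_prefix_superstr_append (x : Str) (r : List Str) (z : Str) :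
    superstr (x :: r) <+: superstr (x :: r ++ [z]) := by
  induction r generalizing x with
  | nil => exact prefix_mergeStr x z
  | cons y r ih =>
    exact (List.prefix_append_right_inj _).mpr (ih y)

lemma length_superstr (x : Str) (r : List Str) :
    (superstr (x :: r)).length =
      pathWeight (x :: r) + ((x :: r).getLast (List.cons_ne_nil _ _)).length := by
  induction r generalizing x with
  | nil => simp [superstr, pathWeight]
  | cons y r ih =>
    rw [superstr_cons_cons, List.length_append, ih y, List.getLast_cons (List.cons_ne_nil _ _),
      pathWeight, prefStr, distStr, List.length_take]
    omega

lemma pathWeight_append_singleton (x : Str) (r : List Str) (z : Str) :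
    pathWeight (x :: r ++ [z]) =
      pathWeight (x :: r) + distStr ((x :: r).getLast (List.cons_ne_nil _ _)) z := by
  induction r generalizing x with
  | nil => simp [pathWeight]
  | cons y r ih =>
    rw [List.cons_append, List.cons_append, pathWeight, ← List.cons_append, ih y,
      List.getLast_cons (List.cons_ne_nil _ _), pathWeight]
    omega

lemma sum_distStr_zip_append_singleton (x : Str) (r : List Str) (z : Str) :
    (((x :: r).zip (r ++ [z])).map fun p => distStr p.1 p.2).sum =
      pathWeight (x :: r ++ [z]) := by
  induction r generalizing x with
  | nil => simp [pathWeight]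
  | cons y r ih =>
    simp only [List.cons_append, List.zip_cons_cons, List.map_cons, List.sum_cons]
    rw [← List.cons_append, ih y]
    rfl

lemma cycleWeight_cons (x : Str) (r : List Str) :
    cycleWeight (x :: r) = pathWeight (x :: r ++ [x]) := by
  rw [cycleWeight, List.rotate_cons_succ, List.rotate_zero, sum_distStr_zip_append_singleton]

lemma cycleWeight_pos {c : List Str} (hc : c ≠ []) (hne : ∀ z ∈ c, z ≠ []) :
    0 < cycleWeight c := by
  obtain ⟨x, r, rfl⟩ := List.exists_cons_of_ne_nil hc
  rw [cycleWeight_cons, pathWeight_append_singleton]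
  have := distStr_pos (hne _ (List.getLast_mem (List.cons_ne_nil x r))) x
  omega

end Superstring

section Powers

variable {α : Type*}

def listPow (u : List α) (n : ℕ) : List α := (List.replicate n u).flatten

@[simp] lemma listPow_zero (u : List α) : listPow u 0 = [] := rfl

lemma listPow_succ (u : List α) (n : ℕ) : listPow u (n + 1) = u ++ listPow u n := by
  simp [listPow, List.replicate_succ]

lemma listPow_succ' (u : List α) (n : ℕ) : listPow u (n + 1) = listPow u n ++ u := by
  simp [listPow, List.replicate_succ']

lemma listPow_prefix_listPow (u : List α) {m n : ℕ} (h : m ≤ n) :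
    listPow u m <+: listPow u n := by
  obtain ⟨k, rfl⟩ := Nat.exists_eq_add_of_le h
  rw [listPow, listPow, List.replicate_add, List.flatten_append]
  exact List.prefix_append _ _

lemma append_listPow (a b : List α) (n : ℕ) :
    a ++ listPow (b ++ a) n = listPow (a ++ b) n ++ a := by
  induction n with
  | zero => simp
  | succ n ih => simp only [listPow_succ, List.append_assoc, ih]

lemma listPow_infix_listPow_succ (a b : List α) (n : ℕ) :
    listPow (b ++ a) n <:+: listPow (a ++ b) (n + 1) :=
  ⟨a, b, by rw [append_listPow, listPow_succ', List.append_assoc]⟩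

lemma exists_prefix_listPow_of_prefix_append {u t : List α} (hu : u ≠ [])
    (h : t <+: u ++ t) : ∃ n, u ++ t <+: listPow u n := by
  induction hk : t.length using Nat.strong_induction_on generalizing t with
  | _ k ih =>
    rcases le_total t.length u.length with hle | hle
    · refine ⟨2, ?_⟩
      rw [listPow_succ, listPow_succ, listPow_zero, List.append_nil]
      exact (List.prefix_append_right_inj u).mpr
        (List.prefix_of_prefix_length_le h (List.prefix_append u t) hle)
    · obtain ⟨t', rfl⟩ := List.prefix_of_prefix_length_le (List.prefix_append u t) h hle
      have hlt : t'.length < k := by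
        have := List.length_pos_iff.mpr hu
        simp only [List.length_append] at hk
        omega
      obtain ⟨n, hn⟩ := ih _ hlt ((List.prefix_append_right_inj u).mp h) rfl
      exact ⟨n + 1, by rw [listPow_succ]; exact (List.prefix_append_right_inj u).mpr hn⟩

lemma exists_eq_listPow_append_of_prefix {u e : List α} {n : ℕ} (h : e <+: listPow u n) :
    ∃ i y, y <+: u ∧ e = listPow u i ++ y := by
  induction n generalizing e with
  | zero => exact ⟨0, [], List.nil_prefix, List.prefix_nil.mp h⟩
  | succ n ih =>
    rw [listPow_succ] at h
    rcases List.prefix_or_prefix_of_prefix h (List.prefix_append u _) with he | ⟨e', rfl⟩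
    · exact ⟨0, e, he, rfl⟩
    · obtain ⟨i, y, hy, rfl⟩ := ih ((List.prefix_append_right_inj u).mp h)
      exact ⟨i + 1, y, hy, by rw [listPow_succ, List.append_assoc]⟩

end Powers

lemma rc_listPow (u : Str) (n : ℕ) : rc (listPow u n) = listPow (rc u) n := by
  induction n with
  | zero => rfl
  | succ n ih => rw [listPow_succ, rc_append, ih, listPow_succ']

section Period

lemma isFactor_of_prefix_listPow {u e : Str} {n : ℕ} (hu : u ≠ []) (h : e <+: listPow u n)
    (hlen : u.length ≤ e.length) : IsFactor u e := by
  obtain ⟨i, y, hy, rfl⟩ := exists_eq_listPow_append_of_prefix h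
  refine ⟨hu, ?_⟩
  rcases Nat.eq_zero_or_pos i with rfl | hi
  · refine ⟨1, le_rfl, [], List.nil_prefix, ?_⟩
    have := hy.eq_of_length (le_antisymm hy.length_le (by simpa using hlen))
    simp [this]
  · exact ⟨i, hi, y, hy, rfl⟩

lemma IsFactor.exists_prefix_listPow {x s : Str} (h : IsFactor x s) :
    ∃ n, s <+: listPow x n := by
  obtain ⟨-, i, -, y, hy, rfl⟩ := h
  exact ⟨i + 1, by rw [listPow_succ']; exact (List.prefix_append_right_inj _).mpr hy⟩

lemma IsFactor.exists_rc {x s : Str} (h : IsFactor x s) :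
    ∃ z, IsFactor z (rc s) ∧ z.length = x.length := by
  obtain ⟨hx, i, hi, y, ⟨y', rfl⟩, rfl⟩ := h
  refine ⟨rc y ++ rc y', ⟨?_, i, hi, rc y, List.prefix_append _ _, ?_⟩, by simp⟩
  · simp only [ne_eq, List.append_eq_nil_iff, rc_eq_nil] at hx ⊢
    tauto
  · change rc (listPow (y ++ y') i ++ y) = listPow (rc y ++ rc y') i ++ rc y
    rw [rc_append, rc_listPow, rc_append, append_listPow]

lemma periodStr_le_length {x s : Str} (h : IsFactor x s) : periodStr s ≤ x.length :=
  Nat.sInf_le ⟨x, h, rfl⟩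

lemma factorStr_spec {s : Str} (hs : s ≠ []) :
    IsFactor (factorStr s) s ∧ (factorStr s).length = periodStr s := by
  have hne : {k | ∃ x : Str, IsFactor x s ∧ x.length = k}.Nonempty :=
    ⟨s.length, s, ⟨hs, 1, le_rfl, [], List.nil_prefix, by simp⟩, rfl⟩
  have hex : ∃ x, IsFactor x s ∧ x.length = periodStr s := Nat.sInf_mem hne
  rw [factorStr, dif_pos hex]
  exact hex.choose_spec

lemma periodStr_rc_le (s : Str) : periodStr (rc s) ≤ periodStr s := by
  rcases eq_or_ne s [] with rfl | hs
  · rfl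
  obtain ⟨hx, hlen⟩ := factorStr_spec hs
  obtain ⟨z, hz, hzlen⟩ := hx.exists_rc
  exact (periodStr_le_length hz).trans (hzlen.trans hlen).le

@[simp] lemma periodStr_rc (s : Str) : periodStr (rc s) = periodStr s :=
  le_antisymm (periodStr_rc_le s) (by simpa using periodStr_rc_le (rc s))

lemma EquivStr.exists_infix_listPow {X Y : Str} (h : EquivStr X Y) (hX : X ≠ [])
    (hY : Y ≠ []) : ∃ g : Str, g ≠ [] ∧ g.length = periodStr X ∧
      (∃ n, X <:+: listPow g n) ∧ ∃ n, Y <:+: listPow g n := by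
  obtain ⟨a, b, ha, hb⟩ := h
  obtain ⟨hfX, hlen⟩ := factorStr_spec hX
  obtain ⟨hfY, -⟩ := factorStr_spec hY
  rw [ha] at hfX hlen
  rw [hb] at hfY
  obtain ⟨n, hn⟩ := hfX.exists_prefix_listPow
  obtain ⟨m, hm⟩ := hfY.exists_prefix_listPow
  exact ⟨a ++ b, hfX.1, hlen, ⟨n, hn.isInfix⟩, m + 1,
    hm.isInfix.trans (listPow_infix_listPow_succ a b m)⟩

/-- Closing the cycle `c = x :: r` gives the string `⟨x, r, x⟩ = u ++ x` with `|u| = w(c)`;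
since `x` is also a prefix of it, `u` is a period of `⟨c⟩`. -/
lemma periodStr_superstr_le_cycleWeight {c : List Str} (hw : 0 < cycleWeight c) :
    periodStr (superstr c) ≤ cycleWeight c := by
  have hc : c ≠ [] := by rintro rfl; simp [cycleWeight] at hw
  obtain ⟨x, r, rfl⟩ := List.exists_cons_of_ne_nil hc
  obtain ⟨u, hu⟩ := getLast_suffix_superstr x (r ++ [x])
  have hlast : (x :: (r ++ [x])).getLast (List.cons_ne_nil _ _) = x := by simp
  rw [hlast] at hu
  have hulen : u.length = cycleWeight (x :: r) := by
    have := congrArg List.length hu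
    rw [List.length_append, length_superstr, hlast, ← List.cons_append,
      ← cycleWeight_cons] at this
    omega
  have hune : u ≠ [] := by rintro rfl; simp only [List.length_nil] at hulen; omega
  obtain ⟨n, hn⟩ := exists_prefix_listPow_of_prefix_append hune
    (hu ▸ prefix_superstr x (r ++ [x]))
  have hle : u.length ≤ (superstr (x :: r)).length := by
    rw [hulen, cycleWeight_cons, pathWeight_append_singleton, length_superstr]
    exact Nat.add_le_add_left (distStr_le_length _ _) _
  rw [← hulen]
  have hpre : superstr (x :: r) <+: listPow u n :=
    (superstr_prefix_superstr_append x r x).trans (hu ▸ hn)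
  exact periodStr_le_length (isFactor_of_prefix_listPow hune hpre hle)

end Period

section Occurrences

variable {α : Type*}

/-- `z` occurs at position `t` of the infinite periodic word `g g g ⋯`. -/
def OccursAt (g : List α) (t : ℕ) (z : List α) : Prop := ∃ n, z <+: (listPow g n).drop t

lemma exists_occursAt_of_infix {g z : List α} {n : ℕ} (h : z <:+: listPow g n) :
    ∃ t, OccursAt g t z := by
  obtain ⟨s, s', hs⟩ := h
  refine ⟨s.length, n, ?_⟩
  rw [← hs, List.append_assoc, List.drop_left]
  exact List.prefix_append _ _

lemma OccursAt.exists_common {g z z' : List α} {t t' : ℕ} (h : OccursAt g t z)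
    (h' : OccursAt g t' z') :
    ∃ n, z <+: (listPow g n).drop t ∧ z' <+: (listPow g n).drop t' := by
  obtain ⟨n, hn⟩ := h
  obtain ⟨n', hn'⟩ := h'
  exact ⟨max n n', hn.trans ((listPow_prefix_listPow g (le_max_left n n')).drop t),
    hn'.trans ((listPow_prefix_listPow g (le_max_right n n')).drop t')⟩

lemma OccursAt.prefix_or_prefix {g z z' : List α} {t : ℕ} (h : OccursAt g t z)
    (h' : OccursAt g t z') : z <+: z' ∨ z' <+: z := by
  obtain ⟨n, hn, hn'⟩ := h.exists_common h'
  exact List.prefix_or_prefix_of_prefix hn hn'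

lemma OccursAt.add_length {g z : List α} {t : ℕ} (h : OccursAt g t z) :
    OccursAt g (t + g.length) z := by
  obtain ⟨n, hn⟩ := h
  exact ⟨n + 1, by rwa [listPow_succ, Nat.add_comm, List.drop_length_add_append]⟩

lemma OccursAt.sub_length {g z : List α} {t : ℕ} (h : OccursAt g t z) (ht : g.length ≤ t) :
    OccursAt g (t - g.length) z := by
  obtain ⟨_ | n, hn⟩ := h
  · exact ⟨0, by simpa using hn⟩
  · refine ⟨n, ?_⟩
    rwa [listPow_succ, show t = g.length + (t - g.length) by omega,
      List.drop_length_add_append] at hn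

lemma OccursAt.mod_length {g z : List α} {t : ℕ} (h : OccursAt g t z) :
    OccursAt g (t % g.length) z := by
  induction t using Nat.strong_induction_on with
  | _ t ih =>
    rcases lt_or_ge t g.length with hlt | hle
    · rwa [Nat.mod_eq_of_lt hlt]
    · rcases Nat.eq_zero_or_pos g.length with h0 | hpos
      · rwa [h0, Nat.mod_zero]
      · rw [Nat.mod_eq_sub_mod hle]
        exact ih _ (by omega) (h.sub_length hle)

end Occurrences

/-- The two occurrences overlap in all but the first `t' - t` characters of `z`, or not at all. -/
lemma distStr_le_of_occursAt {g z z' : Str} {t t' : ℕ} (h : OccursAt g t z)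
    (h' : OccursAt g t' z') (htt' : t < t') (hfree : z' <:+: z → z' = z) :
    distStr z z' ≤ t' - t := by
  obtain ⟨n, hn, hn'⟩ := h.exists_common h'
  by_cases hfar : t + z.length ≤ t'
  · exact (distStr_le_length z z').trans (by omega)
  set k := t' - t
  have hdrop : ((listPow g n).drop t).drop k = (listPow g n).drop t' := by
    rw [List.drop_drop]
    congr 1
    omega
  have hshort : ¬ z' <+: z.drop k := fun hp => by
    have hlen := congrArg List.length (hfree (hp.isInfix.trans (List.drop_suffix k z).isInfix))
    have := hp.length_le
    simp only [List.length_drop] at this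
    omega
  obtain ⟨w, hw⟩ :=
    (List.prefix_or_prefix_of_prefix (hdrop ▸ hn.drop k) hn').resolve_right hshort
  have hw' : w ≠ [] := by
    rintro rfl
    exact hshort (by simp [← hw])
  have hk : z.take k ≠ [] := List.ne_nil_of_length_pos (by simp only [List.length_take]; omega)
  exact (distStr_le_of_eq_append hk hw' (List.take_append_drop k z).symm hw.symm).trans
    (List.length_take_le _ _)

section SortedCycle

lemma pathWeight_add_le_of_pairwise {pos : Str → ℕ} {x : Str} {l : List Str}
    (hsorted : (x :: l).Pairwise (pos · < pos ·))
    (hdist : ∀ z ∈ x :: l, ∀ z' ∈ x :: l, pos z < pos z' →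
      distStr z z' ≤ pos z' - pos z) :
    pathWeight (x :: l) + pos x ≤ pos ((x :: l).getLast (List.cons_ne_nil _ _)) := by
  induction l generalizing x with
  | nil => simp [pathWeight]
  | cons y l ih =>
    have hxy : pos x < pos y := List.rel_of_pairwise_cons hsorted (by simp)
    have hrest := ih hsorted.of_cons fun z hz z' hz' => hdist z (.tail _ hz) z' (.tail _ hz')
    have hstep := hdist x (by simp) y (by simp) hxy
    rw [pathWeight, List.getLast_cons (List.cons_ne_nil _ _)]
    omega

lemma cycleWeight_le_of_pairwise {g : Str} {pos : Str → ℕ} {L : List Str}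
    (hocc : ∀ z ∈ L, OccursAt g (pos z) z ∧ pos z < g.length)
    (hsorted : L.Pairwise (pos · < pos ·))
    (hfree : ∀ z ∈ L, ∀ z' ∈ L, z' <:+: z → z' = z) : cycleWeight L ≤ g.length := by
  rcases L with _ | ⟨x, l⟩
  · simp [cycleWeight]
  have hpath := pathWeight_add_le_of_pairwise hsorted fun z hz z' hz' hlt =>
    distStr_le_of_occursAt (hocc z hz).1 (hocc z' hz').1 hlt (hfree z hz z' hz')
  rw [cycleWeight_cons, pathWeight_append_singleton]
  have hy := List.getLast_mem (List.cons_ne_nil x l)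
  generalize (x :: l).getLast _ = y at hpath hy ⊢
  have hx : x ∈ x :: l := List.mem_cons_self
  have hyg := (hocc y hy).2
  have hwrap : distStr y x ≤ pos x + g.length - pos y :=
    distStr_le_of_occursAt (hocc y hy).1 (hocc x hx).1.add_length (by omega) (hfree y hy x hx)
  omega

lemma exists_perm_cycleWeight_le {g : Str} (hg : g ≠ []) {L : List Str} (hnd : L.Nodup)
    (hfree : ∀ z ∈ L, ∀ z' ∈ L, z' <:+: z → z' = z)
    (hpow : ∀ z ∈ L, ∃ n, z <:+: listPow g n) :
    ∃ L', L'.Perm L ∧ cycleWeight L' ≤ g.length := by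
  have hex : ∀ z, ∃ t, z ∈ L → OccursAt g t z ∧ t < g.length := by
    intro z
    by_cases hz : z ∈ L
    · obtain ⟨n, hn⟩ := hpow z hz
      obtain ⟨t, ht⟩ := exists_occursAt_of_infix hn
      exact ⟨t % g.length, fun _ =>
        ⟨ht.mod_length, Nat.mod_lt _ (List.length_pos_iff.mpr hg)⟩⟩
    · exact ⟨0, fun h => absurd h hz⟩
  choose pos hpos using hex
  have hinj : ∀ z ∈ L, ∀ z' ∈ L, pos z = pos z' → z = z' := by
    intro z hz z' hz' he
    rcases (hpos z hz).1.prefix_or_prefix (he ▸ (hpos z' hz').1) with h | h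
    · exact hfree z' hz' z hz h.isInfix
    · exact (hfree z hz z' hz' h.isInfix).symm
  set L' := L.mergeSort fun a b => decide (pos a ≤ pos b)
  have hmem : ∀ z, z ∈ L' ↔ z ∈ L := fun z => (List.mergeSort_perm L _).mem_iff
  have hle : L'.Pairwise fun a b => decide (pos a ≤ pos b) :=
    List.pairwise_mergeSort (fun a b c hab hbc => by simp only [decide_eq_true_eq] at *; omega)
      (fun a b => by simpa using le_total _ _) L
  refine ⟨L', List.mergeSort_perm L _, cycleWeight_le_of_pairwise
    (fun z hz => hpos z ((hmem z).mp hz)) ?_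
    (fun z hz z' hz' => hfree z ((hmem z).mp hz) z' ((hmem z').mp hz'))⟩
  refine (hle.and ((List.mergeSort_perm L _).nodup_iff.mpr hnd)).imp_of_mem ?_
  rintro a b ha hb ⟨hab, hne⟩
  exact lt_of_le_of_ne (by simpa using hab)
    fun he => hne (hinj a ((hmem a).mp ha) b ((hmem b).mp hb) he)

end SortedCycle

section CycleCover

variable {S : Finset Str} {C : Finset (List Str)} {c d : List Str}

lemma IsCycleCover.eq_of_mem_of_mem (hC : IsCycleCover S C) (hc : c ∈ C) (hd : d ∈ C)
    {z : Str} (hzc : z ∈ c) (hzd : z ∈ d) : c = d :=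
  by_contra fun hcd => hC.2.2.1 c hc d hd hcd z hzc hzd

lemma IsCycleCover.rc_not_mem (hC : IsCycleCover S C) (hc : c ∈ C) (hd : d ∈ C) {z : Str}
    (hz : z ∈ c) : rc z ∉ d := by
  intro hz'
  have hboth : ∀ s ∈ S, (∃ cy ∈ C, s ∈ cy) → (∃ cy ∈ C, rc s ∈ cy) → False :=
    fun s hs h₁ h₂ => by rcases hC.2.2.2.2 s hs with ⟨-, h⟩ | ⟨-, h⟩ <;> contradiction
  rcases hC.2.2.2.1 c hc z hz with hs | hs
  · exact hboth z hs ⟨c, hc, hz⟩ ⟨d, hd, hz'⟩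
  · exact hboth (rc z) hs ⟨d, hd, hz'⟩ ⟨c, hc, by rwa [rc_rc]⟩

lemma IsCycleCover.ne_nil_of_mem (hC : IsCycleCover S C) (hc : c ∈ C) {z : Str} (hz : z ∈ c) :
    z ≠ [] := by
  rintro rfl
  exact hC.rc_not_mem hc hc hz hz

lemma IsCycleCover.cycleWeight_pos (hC : IsCycleCover S C) (hc : c ∈ C) : 0 < cycleWeight c :=
  _root_.cycleWeight_pos (hC.1 c hc) fun _ => hC.ne_nil_of_mem hc

lemma IsCycleCover.superstr_ne_nil (hC : IsCycleCover S C) (hc : c ∈ C) : superstr c ≠ [] := by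
  obtain ⟨z, hz⟩ := List.exists_mem_of_ne_nil c (hC.1 c hc)
  intro h
  exact hC.ne_nil_of_mem hc hz (List.infix_nil.mp (h ▸ infix_superstr_of_mem hz))

lemma eq_or_eq_rc_of_apply_eq {f f' : Str → Str} (hf : ∀ z, f z = z ∨ f z = rc z)
    (hf' : ∀ z, f' z = z ∨ f' z = rc z) {x y : Str} (h : f x = f' y) : x = y ∨ x = rc y := by
  rcases hf x with hx | hx <;> rcases hf' y with hy | hy <;> rw [hx, hy] at h
  · exact .inl h
  · exact .inr h
  · exact .inr (by rw [← h, rc_rc])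
  · exact .inl (rc_injective h)

lemma exists_mem_of_mem_append (hc : c ∈ C) (hd : d ∈ C) {z : Str}
    (hz : z ∈ c ++ d) : ∃ cy ∈ C, z ∈ cy :=
  (List.mem_append.mp hz).elim (⟨c, hc, ·⟩) (⟨d, hd, ·⟩)

lemma IsCycleCover.rc_ne_of_mem_append (hC : IsCycleCover S C) (hc : c ∈ C) (hd : d ∈ C)
    {x y : Str} (hx : x ∈ c ++ d) (hy : y ∈ c ++ d) : x ≠ rc y := by
  obtain ⟨cx, hcx, hx⟩ := exists_mem_of_mem_append hc hd hx
  obtain ⟨cy, hcy, hy⟩ := exists_mem_of_mem_append hc hd hy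
  rintro rfl
  exact hC.rc_not_mem hcy hcx hy hx

lemma IsCycleCover.nodup_map_append (hC : IsCycleCover S C) (hc : c ∈ C) (hd : d ∈ C)
    (hcd : c ≠ d) {f : Str → Str} (hf : ∀ z, f z = z ∨ f z = rc z) :
    ((c ++ d).map f).Nodup := by
  refine List.Nodup.map_on (fun x hx y hy h => ?_) ?_
  · exact (eq_or_eq_rc_of_apply_eq hf hf h).resolve_right (hC.rc_ne_of_mem_append hc hd hx hy)
  · refine List.nodup_append.mpr ⟨hC.2.1 c hc, hC.2.1 d hd, ?_⟩
    rintro z hzc _ hzd rfl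
    exact hcd (hC.eq_of_mem_of_mem hc hd hzc hzd)

lemma IsCycleCover.rc_not_mem_map_append (hC : IsCycleCover S C) (hc : c ∈ C) (hd : d ∈ C)
    {f : Str → Str} (hf : ∀ z, f z = z ∨ f z = rc z) {w : Str} (hw : w ∈ (c ++ d).map f) :
    rc w ∉ (c ++ d).map f := by
  obtain ⟨x, hx, rfl⟩ := List.mem_map.mp hw
  intro h
  obtain ⟨y, hy, hyx⟩ := List.mem_map.mp h
  have hrcf : ∀ z, (rc ∘ f) z = z ∨ (rc ∘ f) z = rc z := fun z => by
    rcases hf z with h | h <;> simp [h]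
  rcases eq_or_eq_rc_of_apply_eq hf hrcf hyx with rfl | rfl
  · rcases hf y with h' | h' <;> rw [h'] at hyx
    · exact hC.rc_ne_of_mem_append hc hd hy hy hyx
    · exact hC.rc_ne_of_mem_append hc hd hy hy (rc_injective hyx)
  · exact hC.rc_ne_of_mem_append hc hd hy hx rfl

lemma IsCycleCover.mem_or_rc_mem_of_mem_map_append (hC : IsCycleCover S C) (hc : c ∈ C)
    (hd : d ∈ C) {f : Str → Str} (hf : ∀ z, f z = z ∨ f z = rc z) {w : Str}
    (hw : w ∈ (c ++ d).map f) : w ∈ S ∨ rc w ∈ S := by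
  obtain ⟨z, hz, rfl⟩ := List.mem_map.mp hw
  obtain ⟨cy, hcy, hz⟩ := exists_mem_of_mem_append hc hd hz
  rcases hf z with h | h <;> rw [h]
  · exact hC.2.2.2.1 cy hcy z hz
  · rw [rc_rc]
    exact (hC.2.2.2.1 cy hcy z hz).symm

lemma IsCycleCover.not_mem_of_mem_map_append (hC : IsCycleCover S C) (hc : c ∈ C)
    (hd : d ∈ C) {f : Str → Str} (hf : ∀ z, f z = z ∨ f z = rc z) {w : Str}
    (hw : w ∈ (c ++ d).map f) {cy : List Str} (hcy : cy ∈ C) (hcyc : cy ≠ c)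
    (hcyd : cy ≠ d) :
    w ∉ cy ∧ rc w ∉ cy := by
  obtain ⟨z, hz, rfl⟩ := List.mem_map.mp hw
  have hoff : z ∉ cy := fun hzcy => by
    rcases List.mem_append.mp hz with hz | hz
    · exact hcyc (hC.eq_of_mem_of_mem hcy hc hzcy hz)
    · exact hcyd (hC.eq_of_mem_of_mem hcy hd hzcy hz)
  obtain ⟨cz, hcz, hz'⟩ := exists_mem_of_mem_append hc hd hz
  rcases hf z with h | h <;> rw [h]
  · exact ⟨hoff, hC.rc_not_mem hcz hcy hz'⟩
  · exact ⟨hC.rc_not_mem hcz hcy hz', by rwa [rc_rc]⟩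

lemma IsCycleCover.merge (hC : IsCycleCover S C) (hc : c ∈ C) (hd : d ∈ C) (hcd : c ≠ d)
    {f : Str → Str} (hf : ∀ z, f z = z ∨ f z = rc z) {L : List Str}
    (hL : L.Perm ((c ++ d).map f)) : IsCycleCover S (insert L ((C.erase c).erase d)) := by
  obtain ⟨hne, hnd, hdisj, hmem, hxor⟩ := id hC
  set rest := (C.erase c).erase d
  have hrest : ∀ {cy}, cy ∈ rest → cy ≠ d ∧ cy ≠ c ∧ cy ∈ C := by simp [rest]
  have hfar : ∀ w ∈ L, ∀ cy ∈ rest, w ∉ cy ∧ rc w ∉ cy := fun w hw cy hcy =>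
    hC.not_mem_of_mem_map_append hc hd hf (hL.mem_iff.mp hw) (hrest hcy).2.2 (hrest hcy).2.1
      (hrest hcy).1
  have hcov : ∀ t, (∃ cy ∈ insert L rest, t ∈ cy) ↔
      t ∈ L ∨ ∃ cy ∈ rest, t ∈ cy := by
    simp [or_and_right, exists_or]
  have hkeep : ∀ t, (∃ cy ∈ C, t ∈ cy) →
      (t ∈ L ∨ ∃ cy ∈ rest, t ∈ cy) ∨
        (rc t ∈ L ∨ ∃ cy ∈ rest, rc t ∈ cy) := by
    rintro t ⟨cy, hcy, ht⟩
    by_cases hcyc : cy = c ∨ cy = d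
    · have htL := hL.mem_iff.mpr (List.mem_map_of_mem (f := f)
        (show t ∈ c ++ d by rcases hcyc with rfl | rfl <;> simp [ht]))
      rcases hf t with h | h <;> rw [h] at htL
      · exact .inl (.inl htL)
      · exact .inr (.inl htL)
    · obtain ⟨hcyc, hcyd⟩ := not_or.mp hcyc
      exact .inl (.inr ⟨cy, by simp [rest, hcyc, hcyd, hcy], ht⟩)
  refine ⟨?_, ?_, ?_, ?_, fun s hs => (xor_iff_or_and_not_and _ _).mpr ⟨?_, ?_⟩⟩
  · rintro cy hcy
    rcases Finset.mem_insert.mp hcy with rfl | hcy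
    · obtain ⟨z, hz⟩ := List.exists_mem_of_ne_nil c (hne c hc)
      exact List.ne_nil_of_mem (hL.mem_iff.mpr (List.mem_map_of_mem (List.mem_append_left d hz)))
    · exact hne cy (hrest hcy).2.2
  · rintro cy hcy
    rcases Finset.mem_insert.mp hcy with rfl | hcy
    · exact hL.nodup_iff.mpr (hC.nodup_map_append hc hd hcd hf)
    · exact hnd cy (hrest hcy).2.2
  · rintro cy₁ h₁ cy₂ h₂ hne' w hw₁ hw₂
    rcases Finset.mem_insert.mp h₁ with rfl | hr₁ <;>
      rcases Finset.mem_insert.mp h₂ with rfl | hr₂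
    · exact hne' rfl
    · exact (hfar w hw₁ cy₂ hr₂).1 hw₂
    · exact (hfar w hw₂ cy₁ hr₁).1 hw₁
    · exact hdisj cy₁ (hrest hr₁).2.2 cy₂ (hrest hr₂).2.2 hne' w hw₁ hw₂
  · rintro cy hcy w hw
    rcases Finset.mem_insert.mp hcy with rfl | hcy
    · exact hC.mem_or_rc_mem_of_mem_map_append hc hd hf (hL.mem_iff.mp hw)
    · exact hmem cy (hrest hcy).2.2 w hw
  · rw [hcov, hcov]
    rcases ((xor_iff_or_and_not_and _ _).mp (hxor s hs)).1 with h | h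
    · exact hkeep s h
    · simpa [or_comm] using hkeep (rc s) h
  · rw [hcov, hcov]
    rintro ⟨hs₁ | ⟨cy₁, h₁, hs₁⟩, hs₂ | ⟨cy₂, h₂, hs₂⟩⟩
    · exact hC.rc_not_mem_map_append hc hd hf (hL.mem_iff.mp hs₁) (hL.mem_iff.mp hs₂)
    · exact (hfar s hs₁ cy₂ h₂).2 hs₂
    · exact (hfar _ hs₂ cy₁ h₁).2 (by rwa [rc_rc])
    · exact ((xor_iff_or_and_not_and _ _).mp (hxor s hs)).2
        ⟨⟨cy₁, (hrest h₁).2.2, hs₁⟩, ⟨cy₂, (hrest h₂).2.2, hs₂⟩⟩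

lemma coverWeight_merge_le (hc : c ∈ C) (hd : d ∈ C) (hcd : c ≠ d) (L : List Str) :
    coverWeight (insert L ((C.erase c).erase d)) + cycleWeight c + cycleWeight d ≤
      coverWeight C + cycleWeight L := by
  have hC := Finset.sum_erase_add C cycleWeight hc
  have hCc := Finset.sum_erase_add (C.erase c) cycleWeight (Finset.mem_erase.mpr ⟨hcd.symm, hd⟩)
  have hins : coverWeight (insert L ((C.erase c).erase d)) ≤
      cycleWeight L + ∑ x ∈ (C.erase c).erase d, cycleWeight x := by
    by_cases hL : L ∈ (C.erase c).erase d
    · rw [coverWeight, Finset.insert_eq_of_mem hL]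
      omega
    · rw [coverWeight, Finset.sum_insert hL]
  simp only [coverWeight] at hins ⊢
  omega

end CycleCover

def orient : Bool → Str → Str
  | false, s => s
  | true, s => rc s

lemma orient_eq_or (b : Bool) (s : Str) : orient b s = s ∨ orient b s = rc s := by
  cases b <;> simp [orient]

@[simp] lemma orient_eq_nil {b : Bool} {s : Str} : orient b s = [] ↔ s = [] := by
  cases b <;> simp [orient]

@[simp] lemma periodStr_orient (b : Bool) (s : Str) : periodStr (orient b s) = periodStr s := by
  cases b <;> simp [orient]

lemma orient_infix_orient (b : Bool) {s t : Str} (h : s <:+: t) : orient b s <:+: orient b t := by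
  cases b
  · exact h
  · exact rc_infix_rc h

lemma not_equivStr_orient_superstr {S : Finset Str} (hS : SubstrFree S)
    {C : Finset (List Str)} (hC : IsCycleCover S C)
    (hopt : ∀ C', IsCycleCover S C' → coverWeight C ≤ coverWeight C')
    {c d : List Str} (hc : c ∈ C) (hd : d ∈ C) (hcd : c ≠ d) (bc bd : Bool) :
    ¬ EquivStr (orient bc (superstr c)) (orient bd (superstr d)) := by
  intro hequiv
  obtain ⟨g, hg, hglen, ⟨n, hX⟩, m, hY⟩ := hequiv.exists_infix_listPow
    (by simpa using hC.superstr_ne_nil hc) (by simpa using hC.superstr_ne_nil hd)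
  set f : Str → Str := fun z => if z ∈ c then orient bc z else orient bd z
  have hf : ∀ z, f z = z ∨ f z = rc z := fun z => by
    simp only [f]
    split_ifs <;> exact orient_eq_or _ _
  have hpow : ∀ w ∈ (c ++ d).map f, ∃ n, w <:+: listPow g n := by
    simp only [List.mem_map, List.mem_append]
    rintro w ⟨z, hz | hz, rfl⟩
    · refine ⟨n, ?_⟩
      simp only [f, if_pos hz]
      exact (orient_infix_orient bc (infix_superstr_of_mem hz)).trans hX
    · refine ⟨m, ?_⟩
      simp only [f, if_neg fun hzc => hcd (hC.eq_of_mem_of_mem hc hd hzc hz)]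
      exact (orient_infix_orient bd (infix_superstr_of_mem hz)).trans hY
  have hfree : ∀ w ∈ (c ++ d).map f, ∀ w' ∈ (c ++ d).map f, w' <:+: w → w' = w :=
    fun w hw w' hw' h => by_contra fun hne =>
      hS w' (hC.mem_or_rc_mem_of_mem_map_append hc hd hf hw')
        w (hC.mem_or_rc_mem_of_mem_map_append hc hd hf hw) hne h
  obtain ⟨L, hL, hLg⟩ :=
    exists_perm_cycleWeight_le hg (hC.nodup_map_append hc hd hcd hf) hfree hpow
  have hmerge := coverWeight_merge_le hc hd hcd L
  have hopt' := hopt _ (hC.merge hc hd hcd hf hL)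
  have hgc : g.length ≤ cycleWeight c := by
    rw [hglen, periodStr_orient]
    exact periodStr_superstr_le_cycleWeight (hC.cycleWeight_pos hc)
  have hd_pos := hC.cycleWeight_pos hd
  omega

/-- the strings corresponding to two distinct cycles of an optimal cycle
cover are inequivalent, and so are their reverse-complement combinations. -/
theorem cycles_inequivalent
    (S : Finset Str) (hS : SubstrFree S)
    (C : Finset (List Str)) (hC : IsCycleCover S C)
    (hopt : ∀ C', IsCycleCover S C' → coverWeight C ≤ coverWeight C')
    (c d : List Str) (hc : c ∈ C) (hd : d ∈ C) (hcd : c ≠ d) :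
    ¬ EquivStr (superstr c) (superstr d) ∧
    ¬ EquivStr (superstr c) (rc (superstr d)) ∧
    ¬ EquivStr (rc (superstr c)) (superstr d) ∧
    ¬ EquivStr (rc (superstr c)) (rc (superstr d)) :=
  ⟨not_equivStr_orient_superstr hS hC hopt hc hd hcd false false,
    not_equivStr_orient_superstr hS hC hopt hc hd hcd false true,
    not_equivStr_orient_superstr hS hC hopt hc hd hcd true false,
    not_equivStr_orient_superstr hS hC hopt hc hd hcd true true⟩
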